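/- Let K, L, A be positive definite d×d matrices with K ⪰ L, and let α > 0. Define D(α) = (1/2) ln det((K + αA)(L + αA)^{-1}). Then D is nonincreasing in α on (0, ∞), and D(α) → 0 as α → ∞. -/

import Mathlib

/-!
Put `M = K - L ⪰ 0` and `S α = L + α A`. Then
`exp (2 D α) = det (S α + M) / det (S α) = det (1 + √M (S α)⁻¹ √M)`.
As `α` grows, `S α` grows in the Loewner order, so `(S α)⁻¹` shrinks, and with it
`1 + √M (S α)⁻¹ √M` and its determinant. For the limit, scaling by `α⁻¹` turns the ratio
into `det (α⁻¹ K + A) / det (α⁻¹ L + A)`, which tends to `det A / det A = 1`.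
-/

open Matrix Filter
open scoped MatrixOrder Topology

namespace Matrix

variable {n : Type*}

lemma PosDef.of_le {S T : Matrix n n ℝ} (hS : S.PosDef) (hST : S ≤ T) : T.PosDef := by
  simpa using hS.add_posSemidef (sub_nonneg.2 hST).posSemidef

variable [Fintype n] [DecidableEq n]

lemma det_add_mul_self {R : Type*} [CommRing R] {S : Matrix n n R} (hS : IsUnit S.det)
    (m : Matrix n n R) : (S + m * m).det = S.det * (1 + m * S⁻¹ * m).det := by
  rw [Matrix.mul_assoc, det_one_add_mul_comm, ← det_mul, Matrix.mul_add, Matrix.mul_one,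
    Matrix.mul_assoc, Matrix.mul_nonsing_inv_cancel_left _ _ hS]

lemma one_le_det_of_one_le {X : Matrix n n ℝ} (hX : 1 ≤ X) : 1 ≤ X.det := by
  have hX' : X.IsHermitian := IsSelfAdjoint.of_nonneg (zero_le_one.trans hX)
  have hspec : ∀ μ ∈ spectrum ℝ X, 1 ≤ μ :=
    (algebraMap_le_iff_le_spectrum (r := 1) hX'.isSelfAdjoint).1 (by simpa using hX)
  rw [hX'.det_eq_prod_eigenvalues]
  exact Finset.one_le_prod fun i _ => by simpa using hspec _ (hX'.eigenvalues_mem_spectrum_real i)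

lemma PosDef.det_le_det_of_le {S T : Matrix n n ℝ} (hS : S.PosDef) (hST : S ≤ T) :
    S.det ≤ T.det := by
  set m := CFC.sqrt (T - S)
  have hT : T = S + m * m := by rw [CFC.sqrt_mul_sqrt_self _ (sub_nonneg.2 hST)]; abel
  have hm : 0 ≤ m * S⁻¹ * m :=
    conjugate_nonneg_of_nonneg hS.inv.posSemidef.nonneg (CFC.sqrt_nonneg _)
  rw [hT, det_add_mul_self (isUnit_iff_ne_zero.2 hS.det_pos.ne')]
  exact le_mul_of_one_le_right hS.det_pos.le (one_le_det_of_one_le (le_add_of_nonneg_right hm))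

lemma PosDef.inv_le_inv_of_le {S T : Matrix n n ℝ} (hS : S.PosDef) (hST : S ≤ T) :
    T⁻¹ ≤ S⁻¹ := by
  have hT := hS.of_le hST
  have := hT.isUnit.invertible
  have := hS.isUnit.invertible
  -- The two Schur complements of this block matrix are `T - S` and `S⁻¹ - T⁻¹`.
  have hblock : (fromBlocks T 1 1ᴴ S⁻¹).PosSemidef :=
    (hS.inv.fromBlocks₂₂ T 1).2 (by simpa [inv_inv_of_invertible] using le_iff.1 hST)
  exact le_iff.2 (by simpa using (hT.fromBlocks₁₁ 1 S⁻¹).1 hblock)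

lemma PosDef.det_add_div_det_le {S T M : Matrix n n ℝ} (hS : S.PosDef) (hST : S ≤ T)
    (hM : 0 ≤ M) : (T + M).det / T.det ≤ (S + M).det / S.det := by
  set m := CFC.sqrt M
  have hm : IsSelfAdjoint m := (CFC.sqrt_nonneg M).isSelfAdjoint
  have hratio {U : Matrix n n ℝ} (hU : U.PosDef) :
      (U + M).det / U.det = (1 + m * U⁻¹ * m).det := by
    rw [← CFC.sqrt_mul_sqrt_self M hM, det_add_mul_self (isUnit_iff_ne_zero.2 hU.det_pos.ne'),
      mul_div_cancel_left₀ _ hU.det_pos.ne']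
  have hT := hS.of_le hST
  rw [hratio hT, hratio hS]
  have hTinv : 0 ≤ m * T⁻¹ * m := hm.conjugate_nonneg hT.inv.posSemidef.nonneg
  exact PosDef.det_le_det_of_le (PosDef.one.of_le (le_add_of_nonneg_right hTinv))
    (add_le_add_right (hm.conjugate_le_conjugate (hS.inv_le_inv_of_le hST)) 1)

lemma tendsto_det_add_smul_div_det (K L : Matrix n n ℝ) {A : Matrix n n ℝ} (hA : A.det ≠ 0) :
    Tendsto (fun α : ℝ => (K + α • A).det / (L + α • A).det) atTop (𝓝 1) := by
  have hcont : ContinuousAt (fun t : ℝ => (t • K + A).det / (t • L + A).det) 0 :=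
    ContinuousAt.div (by fun_prop) (by fun_prop) (by simpa using hA)
  have h := hcont.tendsto
  simp only [zero_smul, zero_add, div_self hA] at h
  refine (h.comp tendsto_inv_atTop_zero).congr' ?_
  filter_upwards [eventually_gt_atTop 0] with α hα
  have hscale (X : Matrix n n ℝ) : X + α • A = α • (α⁻¹ • X + A) := by
    rw [smul_add, smul_inv_smul₀ hα.ne']
  simp only [Function.comp_apply, hscale K, hscale L, det_smul]
  exact (mul_div_mul_left _ _ (pow_ne_zero _ hα.ne')).symm

end Matrix

theorem stmt_13_general {d : ℕ} (K L A : Matrix (Fin d) (Fin d) ℝ)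
    (hL : L.PosDef) (hA : A.PosDef)
    (hKL : (K - L).PosSemidef) :
    AntitoneOn (fun α : ℝ => (1 / 2) * Real.log ((K + α • A) * (L + α • A)⁻¹).det)
        (Set.Ioi (0 : ℝ)) ∧
      Filter.Tendsto (fun α : ℝ => (1 / 2) * Real.log ((K + α • A) * (L + α • A)⁻¹).det)
        Filter.atTop (nhds 0) := by
  have hdet (α : ℝ) :
      ((K + α • A) * (L + α • A)⁻¹).det = (K + α • A).det / (L + α • A).det := by
    rw [det_mul, det_nonsing_inv, Ring.inverse_eq_inv', div_eq_mul_inv]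
  simp only [hdet]
  refine ⟨fun a ha b hb hab => ?_, ?_⟩
  · have hLa : (L + a • A).PosDef := hL.add (hA.smul ha)
    have hLb : (L + b • A).PosDef := hL.add (hA.smul hb)
    have hmono : L + a • A ≤ L + b • A := le_iff.2 <| by
      simpa [← sub_smul] using hA.posSemidef.smul (sub_nonneg.2 hab)
    have hsplit (α : ℝ) : L + α • A + (K - L) = K + α • A := by abel
    have h := hLa.det_add_div_det_le hmono hKL.nonneg
    have hpos := div_pos (hLb.add_posSemidef hKL).det_pos hLb.det_pos
    simp only [hsplit] at h hpos
    exact mul_le_mul_of_nonneg_left (Real.log_le_log hpos h) (by norm_num)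
  · have h := ((tendsto_det_add_smul_div_det K L hA.det_pos.ne').log one_ne_zero).const_mul (1 / 2)
    rwa [Real.log_one, mul_zero] at h

theorem stmt_13 {d : ℕ} (K L A : Matrix (Fin d) (Fin d) ℝ)
    (hK : K.PosDef) (hL : L.PosDef) (hA : A.PosDef)
    (hKL : (K - L).PosSemidef) :
    AntitoneOn (fun α : ℝ => (1 / 2) * Real.log ((K + α • A) * (L + α • A)⁻¹).det)
        (Set.Ioi (0 : ℝ)) ∧
      Filter.Tendsto (fun α : ℝ => (1 / 2) * Real.log ((K + α • A) * (L + α • A)⁻¹).det)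
        Filter.atTop (nhds 0) :=
  stmt_13_general K L A hL hA hKL
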